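/- Uniqueness for a nonlocal linear terminal value problem via contraction: let 𝒜, ℬ₁, ℬ₂ and 𝒞ᵢ, 𝒞₋ᵢ (i = 1,…,K) be continuous bounded matrix-valued functions on Δ[0,T]. Then the only continuous function Λ̄ : Δ[0,T] → ℝ^{d×d}, C¹ in t, satisfying Λ̄'(τ;t) + Λ̄(τ;t)𝒜(t) + 𝒜(t)ᵀΛ̄(τ;t) + ℬ₁(t)ᵀΛ̄(τ;t)ℬ₁(t) + ℬ₂(t)ᵀΛ̄(τ;t)ℬ₂(t) + Σ_{i=1}^{K} 𝒞ᵢ(τ;t) Λ̄(t;t) 𝒞₋ᵢ(τ;t) = 0 for 0 ≤ τ ≤ t ≤ T with Λ̄(τ;T) = 0 for all τ, is Λ̄ ≡ 0. -/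

import Mathlib

/-!
Fix `τ`. Because the terminal value vanishes, a backward comparison argument turns a bound
`‖Λ(τ;t)‖ ≤ c (T - t)ⁿ` that holds uniformly on the triangle, together with
`‖∂ₜΛ(τ;t)‖ ≤ L (‖Λ(τ;t)‖ + ‖Λ(t;t)‖)`, into `‖Λ(τ;t)‖ ≤ 2Lc/(n+1) · (T - t)ⁿ⁺¹`. The bound is
uniform in `τ`, so it also covers the nonlocal term `Λ(t;t)`. Starting from a bound `B` given by
compactness, iterating gives `‖Λ(τ;t)‖ ≤ B (2L(T - t))ⁿ / n!` for every `n`, so `Λ = 0`. Such an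
`L` exists because the coefficients are bounded and transposition is bounded on matrices.
-/

open Set Matrix

attribute [local instance] Matrix.linftyOpNormedAddCommGroup Matrix.linftyOpNormedSpace

theorem isCompact_triangle (a T : ℝ) :
    IsCompact {p : ℝ × ℝ | a ≤ p.1 ∧ p.1 ≤ p.2 ∧ p.2 ≤ T} := by
  have hbox : IsCompact (Icc a T ×ˢ Icc a T) := isCompact_Icc.prod isCompact_Icc
  refine hbox.of_isClosed_subset
    ((isClosed_le continuous_const continuous_fst).inter
      ((isClosed_le continuous_fst continuous_snd).inter
        (isClosed_le continuous_snd continuous_const))) ?_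
  rintro p ⟨hap, hp, hpT⟩
  exact ⟨⟨hap, hp.trans hpT⟩, ⟨hap.trans hp, hpT⟩⟩

theorem Matrix.exists_linfty_opNorm_transpose_le (m n 𝕜 : Type*) [Fintype m] [Fintype n]
    [NontriviallyNormedField 𝕜] [CompleteSpace 𝕜] :
    ∃ c > 0, ∀ A : Matrix m n 𝕜, ‖Aᵀ‖ ≤ c * ‖A‖ :=
  (transposeLinearEquiv m n 𝕜 𝕜).toLinearMap.toContinuousLinearMap.bound

section RiccatiBound

variable {𝔸 : Type*} [NonUnitalSeminormedRing 𝔸] {R : ℝ}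

theorem norm_mul_mul_le_of_le {a x b : 𝔸} (ha : ‖a‖ ≤ R) (hb : ‖b‖ ≤ R) :
    ‖a * x * b‖ ≤ R ^ 2 * ‖x‖ := by
  have hR : 0 ≤ R := (norm_nonneg a).trans ha
  calc ‖a * x * b‖ ≤ ‖a‖ * ‖x‖ * ‖b‖ := norm_mul₃_le
    _ ≤ R * ‖x‖ * R := by gcongr
    _ = R ^ 2 * ‖x‖ := by ring

theorem norm_riccati_le {ι : Type*} [Fintype ι] {X Y A A' B₁ B₁' B₂ B₂' : 𝔸} {C C' : ι → 𝔸}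
    (hA : ‖A‖ ≤ R) (hA' : ‖A'‖ ≤ R) (hB₁ : ‖B₁‖ ≤ R) (hB₁' : ‖B₁'‖ ≤ R)
    (hB₂ : ‖B₂‖ ≤ R) (hB₂' : ‖B₂'‖ ≤ R) (hC : ∀ i, ‖C i‖ ≤ R) (hC' : ∀ i, ‖C' i‖ ≤ R) :
    ‖X * A + A' * X + B₁' * X * B₁ + B₂' * X * B₂ + ∑ i, C i * Y * C' i‖ ≤
      (2 * R + (2 + Fintype.card ι) * R ^ 2) * (‖X‖ + ‖Y‖) := by
  have hR : 0 ≤ R := (norm_nonneg A).trans hA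
  have hXA : ‖X * A‖ ≤ R * ‖X‖ := (norm_mul_le _ _).trans (by rw [mul_comm]; gcongr)
  have hA'X : ‖A' * X‖ ≤ R * ‖X‖ := (norm_mul_le _ _).trans (by gcongr)
  have hsum : ‖∑ i, C i * Y * C' i‖ ≤ Fintype.card ι * (R ^ 2 * ‖Y‖) := by
    simpa using norm_sum_le_of_le Finset.univ fun i _ =>
      norm_mul_mul_le_of_le (x := Y) (hC i) (hC' i)
  calc _ ≤ ‖X * A‖ + ‖A' * X‖ + ‖B₁' * X * B₁‖ + ‖B₂' * X * B₂‖ + ‖∑ i, C i * Y * C' i‖ :=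
        (norm_add_le _ _).trans <| add_le_add_left ((norm_add_le _ _).trans <|
          add_le_add_left norm_add₃_le _) _
    _ ≤ R * ‖X‖ + R * ‖X‖ + R ^ 2 * ‖X‖ + R ^ 2 * ‖X‖ + Fintype.card ι * (R ^ 2 * ‖Y‖) := by
        gcongr
        exacts [norm_mul_mul_le_of_le hB₁' hB₁, norm_mul_mul_le_of_le hB₂' hB₂]
    _ ≤ (2 * R + (2 + Fintype.card ι) * R ^ 2) * (‖X‖ + ‖Y‖) := by
        have : 0 ≤ (2 * R + 2 * R ^ 2) * ‖Y‖ + Fintype.card ι * R ^ 2 * ‖X‖ := by positivity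
        linarith

end RiccatiBound

section Gronwall

variable {E : Type*} [NormedAddCommGroup E] [NormedSpace ℝ E]

theorem image_norm_le_of_norm_deriv_le_neg_deriv_terminal {f f' : ℝ → E} {φ φ' : ℝ → ℝ}
    {a b : ℝ} (hf : ∀ x ∈ Icc a b, HasDerivWithinAt f (f' x) (Icc a b) x)
    (hφ : ∀ x, HasDerivAt φ (φ' x) x) (hb : ‖f b‖ ≤ φ b)
    (bound : ∀ x ∈ Ioc a b, ‖f' x‖ ≤ -φ' x) :
    ∀ x ∈ Icc a b, ‖f x‖ ≤ φ x := by
  have hneg : MapsTo Neg.neg (Icc (-b) (-a)) (Icc a b) := fun y hy =>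
    ⟨le_neg.2 hy.2, neg_le.1 hy.1⟩
  have hfc : ContinuousOn f (Icc a b) := fun x hx => (hf x hx).continuousWithinAt
  have hcont : ContinuousOn (fun y => f (-y)) (Icc (-b) (-a)) :=
    hfc.comp continuous_neg.continuousOn hneg
  have hderiv : ∀ y ∈ Ico (-b) (-a),
      HasDerivWithinAt (fun y => f (-y)) ((-1 : ℝ) • f' (-y)) (Ici y) y := fun y hy =>
    ((hf (-y) (hneg ⟨hy.1, hy.2.le⟩)).scomp y (hasDerivWithinAt_neg y _)
      hneg).mono_of_mem_nhdsWithin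
        (Filter.mem_of_superset (Icc_mem_nhdsGE hy.2) (Icc_subset_Icc_left hy.1))
  intro x hx
  simpa using image_norm_le_of_norm_deriv_right_le_deriv_boundary hcont hderiv
    (B := fun y => φ (-y)) (B' := fun y => -φ' (-y)) (by simpa using hb)
    (fun y => by simpa [Function.comp_def] using (hφ (-y)).comp y (hasDerivAt_neg y))
    (fun y hy => by simpa using bound (-y) ⟨lt_neg.1 hy.2, neg_le.1 hy.1⟩)
    (x := -x) ⟨neg_le_neg hx.2, neg_le_neg hx.1⟩

variable {Λ Λ' : ℝ → ℝ → E} {a T L : ℝ}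

theorem nonlocal_gronwall_step (hL : 0 ≤ L)
    (hderiv : ∀ τ t, a ≤ τ → τ ≤ t → t ≤ T → HasDerivWithinAt (Λ τ) (Λ' τ t) (Icc τ T) t)
    (hbound : ∀ τ t, a ≤ τ → τ ≤ t → t ≤ T → ‖Λ' τ t‖ ≤ L * (‖Λ τ t‖ + ‖Λ t t‖))
    (hterm : ∀ τ, a ≤ τ → τ ≤ T → Λ τ T = 0) {c : ℝ} {n : ℕ}
    (hn : ∀ τ t, a ≤ τ → τ ≤ t → t ≤ T → ‖Λ τ t‖ ≤ c * (T - t) ^ n) :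
    ∀ τ t, a ≤ τ → τ ≤ t → t ≤ T → ‖Λ τ t‖ ≤ 2 * L * c / (n + 1) * (T - t) ^ (n + 1) := by
  intro τ t hτ hτt htT
  refine image_norm_le_of_norm_deriv_le_neg_deriv_terminal
    (φ := fun s => 2 * L * c / (n + 1) * (T - s) ^ (n + 1))
    (φ' := fun s => -(2 * L * c * (T - s) ^ n))
    (fun x hx => (hderiv τ x hτ (hτt.trans hx.1) hx.2).mono (Icc_subset_Icc_left hτt))
    (fun s => ?_) (by simp [hterm τ hτ (hτt.trans htT)]) (fun x hx => ?_) t ⟨le_rfl, htT⟩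
  · refine (((hasDerivAt_pow (n + 1) (T - s)).comp_const_sub T s).const_mul
      (2 * L * c / (n + 1))).congr_deriv ?_
    push_cast
    field_simp
  · have hx' : τ ≤ x := hτt.trans hx.1.le
    calc ‖Λ' τ x‖ ≤ L * (‖Λ τ x‖ + ‖Λ x x‖) := hbound τ x hτ hx' hx.2
      _ ≤ L * (c * (T - x) ^ n + c * (T - x) ^ n) := by
        gcongr
        exacts [hn τ x hτ hx' hx.2, hn x x (hτ.trans hx') le_rfl hx.2]
      _ = -(-(2 * L * c * (T - x) ^ n)) := by ring

theorem nonlocal_gronwall_iterate (hL : 0 ≤ L)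
    (hderiv : ∀ τ t, a ≤ τ → τ ≤ t → t ≤ T → HasDerivWithinAt (Λ τ) (Λ' τ t) (Icc τ T) t)
    (hbound : ∀ τ t, a ≤ τ → τ ≤ t → t ≤ T → ‖Λ' τ t‖ ≤ L * (‖Λ τ t‖ + ‖Λ t t‖))
    (hterm : ∀ τ, a ≤ τ → τ ≤ T → Λ τ T = 0) {B : ℝ}
    (hB : ∀ τ t, a ≤ τ → τ ≤ t → t ≤ T → ‖Λ τ t‖ ≤ B) (n : ℕ) :
    ∀ τ t, a ≤ τ → τ ≤ t → t ≤ T → ‖Λ τ t‖ ≤ B * (2 * L) ^ n / n.factorial * (T - t) ^ n := by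
  induction n with
  | zero => simpa using hB
  | succ n ih =>
    intro τ t hτ hτt htT
    calc ‖Λ τ t‖ ≤ 2 * L * (B * (2 * L) ^ n / n.factorial) / (n + 1) * (T - t) ^ (n + 1) :=
          nonlocal_gronwall_step hL hderiv hbound hterm ih τ t hτ hτt htT
      _ = B * (2 * L) ^ (n + 1) / (n + 1).factorial * (T - t) ^ (n + 1) := by
          push_cast [Nat.factorial_succ]
          field_simp
          ring

theorem eq_zero_of_nonlocal_gronwall (hL : 0 ≤ L)
    (hderiv : ∀ τ t, a ≤ τ → τ ≤ t → t ≤ T → HasDerivWithinAt (Λ τ) (Λ' τ t) (Icc τ T) t)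
    (hbound : ∀ τ t, a ≤ τ → τ ≤ t → t ≤ T → ‖Λ' τ t‖ ≤ L * (‖Λ τ t‖ + ‖Λ t t‖))
    (hterm : ∀ τ, a ≤ τ → τ ≤ T → Λ τ T = 0) {B : ℝ}
    (hB : ∀ τ t, a ≤ τ → τ ≤ t → t ≤ T → ‖Λ τ t‖ ≤ B) :
    ∀ τ t, a ≤ τ → τ ≤ t → t ≤ T → Λ τ t = 0 := by
  intro τ t hτ hτt htT
  have hlim : Filter.Tendsto (fun n : ℕ => B * (2 * L) ^ n / n.factorial * (T - t) ^ n)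
      Filter.atTop (nhds 0) := by
    simpa [mul_pow, mul_div_assoc, div_mul_eq_mul_div, mul_comm, mul_left_comm] using
      (FloorSemiring.tendsto_pow_div_factorial_atTop (2 * L * (T - t))).const_mul B
  exact norm_le_zero_iff.1 <| ge_of_tendsto' hlim fun n =>
    nonlocal_gronwall_iterate hL hderiv hbound hterm hB n τ t hτ hτt htT

end Gronwall

theorem nonlocal_terminal_value_uniqueness_general {d K : ℕ} (T : ℝ)
    (𝒜 ℬ₁ ℬ₂ : ℝ → Matrix (Fin d) (Fin d) ℝ)
    (𝒞 𝒞' : Fin K → ℝ → ℝ → Matrix (Fin d) (Fin d) ℝ)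
    (M : ℝ)
    (hM𝒜 : ∀ t ∈ Icc (0 : ℝ) T, ‖𝒜 t‖ ≤ M)
    (hMℬ₁ : ∀ t ∈ Icc (0 : ℝ) T, ‖ℬ₁ t‖ ≤ M)
    (hMℬ₂ : ∀ t ∈ Icc (0 : ℝ) T, ‖ℬ₂ t‖ ≤ M)
    (hM𝒞 : ∀ i, ∀ τ t, 0 ≤ τ → τ ≤ t → t ≤ T → ‖𝒞 i τ t‖ ≤ M ∧ ‖𝒞' i τ t‖ ≤ M)
    (Λ : ℝ → ℝ → Matrix (Fin d) (Fin d) ℝ)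
    (hΛcont : ContinuousOn (fun p : ℝ × ℝ => Λ p.1 p.2)
      {p : ℝ × ℝ | 0 ≤ p.1 ∧ p.1 ≤ p.2 ∧ p.2 ≤ T})
    (hode : ∀ τ t, 0 ≤ τ → τ ≤ t → t ≤ T →
      HasDerivWithinAt (Λ τ)
        (-(Λ τ t * 𝒜 t + (𝒜 t)ᵀ * Λ τ t + (ℬ₁ t)ᵀ * Λ τ t * ℬ₁ t + (ℬ₂ t)ᵀ * Λ τ t * ℬ₂ t
          + ∑ i : Fin K, 𝒞 i τ t * Λ t t * 𝒞' i τ t))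
        (Icc τ T) t)
    (hterm : ∀ τ ∈ Icc (0 : ℝ) T, Λ τ T = 0) :
    ∀ τ t, 0 ≤ τ → τ ≤ t → t ≤ T → Λ τ t = 0 := by
  obtain ⟨B, hB⟩ := (isCompact_triangle 0 T).exists_bound_of_continuousOn hΛcont
  obtain ⟨R, hR₀, hR⟩ :
      ∃ R ≥ 0, ∀ A : Matrix (Fin d) (Fin d) ℝ, ‖A‖ ≤ M → ‖A‖ ≤ R ∧ ‖Aᵀ‖ ≤ R := by
    obtain ⟨c, hc₀, hc⟩ := exists_linfty_opNorm_transpose_le (Fin d) (Fin d) ℝ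
    refine ⟨(1 + c) * |M|, by nlinarith [abs_nonneg M], fun A hA => ⟨?_, ?_⟩⟩ <;>
      nlinarith [hc A, le_abs_self M, abs_nonneg M]
  -- the `linfty` operator norm is submultiplicative
  let _ := Matrix.linftyOpNonUnitalNormedRing (n := Fin d) (α := ℝ)
  refine eq_zero_of_nonlocal_gronwall (L := 2 * R + (2 + K) * R ^ 2) (by positivity) hode ?_
    (fun τ hτ hτT => hterm τ ⟨hτ, hτT⟩) (fun τ t hτ hτt htT => hB (τ, t) ⟨hτ, hτt, htT⟩)
  intro τ t hτ hτt htT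
  have ht : t ∈ Icc 0 T := ⟨hτ.trans hτt, htT⟩
  rw [norm_neg]
  simpa using norm_riccati_le (hR _ (hM𝒜 t ht)).1 (hR _ (hM𝒜 t ht)).2
    (hR _ (hMℬ₁ t ht)).1 (hR _ (hMℬ₁ t ht)).2 (hR _ (hMℬ₂ t ht)).1 (hR _ (hMℬ₂ t ht)).2
    (fun i => (hR _ (hM𝒞 i τ t hτ hτt htT).1).1) (fun i => (hR _ (hM𝒞 i τ t hτ hτt htT).2).1)

/-- Uniqueness for the nonlocal linear terminal value problem: if `Λ̄` is continuous on the
triangle `Δ[0,T]`, `C¹` in `t`, satisfies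
`Λ̄'(τ;t) + Λ̄(τ;t)𝒜(t) + 𝒜(t)ᵀΛ̄(τ;t) + ℬ₁(t)ᵀΛ̄(τ;t)ℬ₁(t) + ℬ₂(t)ᵀΛ̄(τ;t)ℬ₂(t)
  + Σᵢ 𝒞ᵢ(τ;t) Λ̄(t;t) 𝒞₋ᵢ(τ;t) = 0` and `Λ̄(τ;T) = 0`, then `Λ̄ ≡ 0` on the triangle. -/
theorem nonlocal_terminal_value_uniqueness {d K : ℕ} (T : ℝ) (hT : 0 ≤ T)
    (𝒜 ℬ₁ ℬ₂ : ℝ → Matrix (Fin d) (Fin d) ℝ)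
    (𝒞 𝒞' : Fin K → ℝ → ℝ → Matrix (Fin d) (Fin d) ℝ)
    (h𝒜 : ContinuousOn 𝒜 (Icc 0 T)) (hℬ₁ : ContinuousOn ℬ₁ (Icc 0 T))
    (hℬ₂ : ContinuousOn ℬ₂ (Icc 0 T))
    (h𝒞 : ∀ i, ContinuousOn (fun p : ℝ × ℝ => 𝒞 i p.1 p.2)
      {p : ℝ × ℝ | 0 ≤ p.1 ∧ p.1 ≤ p.2 ∧ p.2 ≤ T})
    (h𝒞' : ∀ i, ContinuousOn (fun p : ℝ × ℝ => 𝒞' i p.1 p.2)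
      {p : ℝ × ℝ | 0 ≤ p.1 ∧ p.1 ≤ p.2 ∧ p.2 ≤ T})
    (M : ℝ)
    (hM𝒜 : ∀ t ∈ Icc (0 : ℝ) T, ‖𝒜 t‖ ≤ M)
    (hMℬ₁ : ∀ t ∈ Icc (0 : ℝ) T, ‖ℬ₁ t‖ ≤ M)
    (hMℬ₂ : ∀ t ∈ Icc (0 : ℝ) T, ‖ℬ₂ t‖ ≤ M)
    (hM𝒞 : ∀ i, ∀ τ t, 0 ≤ τ → τ ≤ t → t ≤ T → ‖𝒞 i τ t‖ ≤ M ∧ ‖𝒞' i τ t‖ ≤ M)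
    (Λ : ℝ → ℝ → Matrix (Fin d) (Fin d) ℝ)
    (hΛcont : ContinuousOn (fun p : ℝ × ℝ => Λ p.1 p.2)
      {p : ℝ × ℝ | 0 ≤ p.1 ∧ p.1 ≤ p.2 ∧ p.2 ≤ T})
    (hode : ∀ τ t, 0 ≤ τ → τ ≤ t → t ≤ T →
      HasDerivWithinAt (Λ τ)
        (-(Λ τ t * 𝒜 t + (𝒜 t)ᵀ * Λ τ t + (ℬ₁ t)ᵀ * Λ τ t * ℬ₁ t + (ℬ₂ t)ᵀ * Λ τ t * ℬ₂ t
          + ∑ i : Fin K, 𝒞 i τ t * Λ t t * 𝒞' i τ t))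
        (Icc τ T) t)
    (hterm : ∀ τ ∈ Icc (0 : ℝ) T, Λ τ T = 0) :
    ∀ τ t, 0 ≤ τ → τ ≤ t → t ≤ T → Λ τ t = 0 :=
  nonlocal_terminal_value_uniqueness_general T 𝒜 ℬ₁ ℬ₂ 𝒞 𝒞' M hM𝒜 hMℬ₁ hMℬ₂ hM𝒞 Λ hΛcont hode hterm
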